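/- Let E be a finite-dimensional real inner product space and let A be a positive semidefinite symmetric (self-adjoint) endomorphism of E. Then A∧id is nonnegative as a curvature operator: for every m and every finite families of vectors x₁,…,x_m and y₁,…,y_m in E, Σ_{a=1}^m Σ_{b=1}^m (A∧id)(x_a, y_a, x_b, y_b) ≥ 0. -/

import Mathlib

open scoped RealInnerProductSpace

/-- The tensor `A ∧ id` associated to a bilinear form `A` on a real inner product space:
`(A∧id)(x,y,z,w) = ½(A(x,z)⟨y,w⟩ + ⟨x,z⟩A(y,w) − A(x,w)⟨y,z⟩ − ⟨x,w⟩A(y,z))`. -/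
noncomputable def wedgeId {E : Type*} [NormedAddCommGroup E] [InnerProductSpace ℝ E]
    (A : E → E → ℝ) (x y z w : E) : ℝ :=
  (A x z * ⟪y, w⟫ + ⟪x, z⟫ * A y w - A x w * ⟪y, z⟫ - ⟪x, w⟫ * A y z) / 2

/-!
Diagonalising `A` in an orthonormal eigenbasis `(bᵢ)` writes the form `⟪A u, w⟫` as
`∑ᵢ μᵢ ⟪u, bᵢ⟫⟪w, bᵢ⟫` with eigenvalues `μᵢ ≥ 0`. Since `A ↦ A∧id` is linear, it suffices to
treat a rank-one form `⟪u, v⟫⟪w, v⟫`, and for it the quadratic form on 2-vectors is a square: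
`∑ₐ ∑_b (A∧id)(xₐ, yₐ, x_b, y_b) = ½‖∑ₐ (⟪xₐ, v⟫ yₐ - ⟪yₐ, v⟫ xₐ)‖²`.
-/

open Finset

section

variable {E : Type*} [NormedAddCommGroup E] [InnerProductSpace ℝ E]

lemma wedgeId_sum_mul {ι : Type*} (s : Finset ι) (c : ι → ℝ) (B : ι → E → E → ℝ)
    (x y z w : E) :
    wedgeId (fun u v => ∑ i ∈ s, c i * B i u v) x y z w =
      ∑ i ∈ s, c i * wedgeId (B i) x y z w := by
  simp only [wedgeId, sum_mul, mul_sum, ← sum_add_distrib, ← sum_sub_distrib, sum_div]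
  exact sum_congr rfl fun i _ => by ring

lemma sum_wedgeId_rankOne_eq {ι : Type*} [Fintype ι] (v : E) (x y : ι → E) :
    ∑ a, ∑ b, wedgeId (fun u w => ⟪u, v⟫ * ⟪w, v⟫) (x a) (y a) (x b) (y b) =
      ‖∑ a, (⟪x a, v⟫ • y a - ⟪y a, v⟫ • x a)‖ ^ 2 / 2 := by
  rw [← real_inner_self_eq_norm_sq, sum_inner, sum_div]
  refine sum_congr rfl fun a _ => ?_
  rw [inner_sum, sum_div]
  refine sum_congr rfl fun b _ => ?_
  simp only [wedgeId, inner_sub_left, inner_sub_right, real_inner_smul_left,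
    real_inner_smul_right, real_inner_comm (x b) (y a), real_inner_comm (y b) (x a)]
  ring

lemma sum_wedgeId_nonneg_of_eq_sum_rankOne {ι κ : Type*} [Fintype ι] (s : Finset κ)
    (A : E → E → ℝ) (c : κ → ℝ) (v : κ → E) (hc : ∀ i ∈ s, 0 ≤ c i)
    (hA : A = fun u w => ∑ i ∈ s, c i * (⟪u, v i⟫ * ⟪w, v i⟫)) (x y : ι → E) :
    0 ≤ ∑ a, ∑ b, wedgeId A (x a) (y a) (x b) (y b) := by
  simp only [hA, wedgeId_sum_mul]
  rw [sum_congr rfl fun a _ => sum_comm, sum_comm]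
  refine sum_nonneg fun i hi => ?_
  rw [← sum_congr rfl fun a _ => mul_sum _ _ _, ← mul_sum, sum_wedgeId_rankOne_eq]
  exact mul_nonneg (hc i hi) (by positivity)

lemma LinearMap.IsSymmetric.inner_apply_eq_sum_eigenvalues [FiniteDimensional ℝ E]
    {T : E →ₗ[ℝ] E} (hT : T.IsSymmetric) {n : ℕ} (hn : Module.finrank ℝ E = n) (u w : E) :
    ⟪T u, w⟫ = ∑ i, hT.eigenvalues hn i *
      (⟪u, hT.eigenvectorBasis hn i⟫ * ⟪w, hT.eigenvectorBasis hn i⟫) := by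
  rw [← (hT.eigenvectorBasis hn).sum_inner_mul_inner]
  refine sum_congr rfl fun i _ => ?_
  rw [hT, hT.apply_eigenvectorBasis, real_inner_smul_right, real_inner_comm w]
  rw [RCLike.ofReal_real_eq_id, id_eq]
  ring

end

/-- If `A` is a positive semidefinite self-adjoint endomorphism of a
finite-dimensional real inner product space, then `A∧id` is nonnegative as a curvature
operator: `∑ₐ ∑_b (A∧id)(xₐ, yₐ, x_b, y_b) ≥ 0` for all finite families `(xₐ)`, `(yₐ)`. -/
theorem stmt9 {E : Type*} [NormedAddCommGroup E] [InnerProductSpace ℝ E]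
    [FiniteDimensional ℝ E]
    (A : E →ₗ[ℝ] E) (hAsym : A.IsSymmetric)
    (hpsd : ∀ x : E, 0 ≤ ⟪A x, x⟫) :
    ∀ (m : ℕ) (x y : Fin m → E),
      0 ≤ ∑ a, ∑ b, wedgeId (fun u w => ⟪A u, w⟫) (x a) (y a) (x b) (y b) := by
  intro m x y
  have hApos : A.IsPositive := A.isPositive_iff.mpr ⟨hAsym, hpsd⟩
  exact sum_wedgeId_nonneg_of_eq_sum_rankOne univ _ _ _
    (fun i _ => hApos.nonneg_eigenvalues rfl i)
    (funext₂ (hAsym.inner_apply_eq_sum_eigenvalues rfl)) x y
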